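/- Define for n ∈ ℕ, j ∈ ℕ₀ + 1/2, and 0 < κ < 1 the Dirac eigenvalue λ_n(κ, j) = (1 - κ^2/((n - 1 + sqrt((j + 1/2)^2 - κ^2))^2 + κ^2))^{1/2}. Then for l = j ± 1/2 (with l ∈ ℕ₀) one has 1 - λ_n(κ, j) ≥ κ^2 / (2 (n + l)^2). -/
import Mathlib


/-- The Sommerfeld eigenvalues of the hydrogenic Dirac operator. -/
noncomputable def diracEigenvalue (n : ℕ) (j κ : ℝ) : ℝ :=
  Real.sqrt (1 - κ ^ 2 /
    (((n : ℝ) - 1 + Real.sqrt ((j + 1 / 2) ^ 2 - κ ^ 2)) ^ 2 + κ ^ 2))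

theorem dirac_dominates_schroedinger (n l : ℕ) (j κ : ℝ)
    (hn : 1 ≤ n) (hκ : 0 < κ) (hκ1 : κ < 1)
    (hj : j = (l : ℝ) + 1 / 2 ∨ j = (l : ℝ) - 1 / 2) (hj' : 1 / 2 ≤ j) :
    κ ^ 2 / (2 * ((n : ℝ) + (l : ℝ)) ^ 2) ≤ 1 - diracEigenvalue n j κ := by
  have hl0 : (0:ℝ) ≤ (l:ℝ) := Nat.cast_nonneg l
  have hn1 : (1:ℝ) ≤ (n:ℝ) := by exact_mod_cast hn
  have hl1 : j + 1/2 ≤ (l:ℝ) + 1 := by rcases hj with h|h <;> rw [h] <;> linarith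
  have hκ2 : κ^2 < 1 := by nlinarith
  set s := Real.sqrt ((j + 1/2)^2 - κ^2) with hs
  have hs0 : 0 ≤ s := Real.sqrt_nonneg _
  set r := Real.sqrt (((l:ℝ)+1)^2 - κ^2) with hr
  have hr0 : 0 ≤ r := Real.sqrt_nonneg _
  have hsr : s ≤ r := by
    apply Real.sqrt_le_sqrt; nlinarith
  have hrsq : r ^ 2 = ((l:ℝ)+1)^2 - κ^2 := Real.sq_sqrt (by nlinarith)
  have hrle : r ≤ (l:ℝ) + 1 := by nlinarith
  set D := ((n:ℝ) - 1 + s)^2 + κ^2 with hD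
  have hDpos : 0 < D := by positivity
  have hDle : D ≤ ((n:ℝ) + (l:ℝ))^2 := by nlinarith
  set t := κ^2 / D with ht
  have htpos : 0 < t := by positivity
  have ht1 : t ≤ 1 := by
    rw [ht, div_le_one hDpos]; nlinarith
  have hsqrt : Real.sqrt (1 - t) ≤ 1 - t/2 := by
    rw [show (1:ℝ) - t/2 = Real.sqrt ((1 - t/2)^2) from
      (Real.sqrt_sq (by linarith)).symm]
    apply Real.sqrt_le_sqrt; nlinarith
  have hfinal : κ ^ 2 / (2 * ((n : ℝ) + (l : ℝ)) ^ 2) ≤ t / 2 := by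
    rw [ht, div_div, mul_comm D 2]
    gcongr κ ^ 2 / ?_
    linarith
  calc κ ^ 2 / (2 * ((n : ℝ) + (l : ℝ)) ^ 2) ≤ t / 2 := hfinal
    _ ≤ 1 - Real.sqrt (1 - t) := by linarith
    _ = 1 - diracEigenvalue n j κ := by rw [diracEigenvalue, ht, hD, hs]
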